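/- arXiv:2008.08111 — 7 statements merged into one kernel-verified Lean document; each statement's English description precedes it below -/
import Mathlib

section
/- If A is a self-adjoint positive semidefinite operator on a finite-dimensional real Hilbert space U and u : [0,T] → U solves u'(t) + A u(t) = f(t) with u(0) = u⁰, then for all t ∈ [0,T], ⟨A u(t), u(t)⟩ ≤ ⟨A u⁰, u⁰⟩ + (1/2) ∫₀ᵗ ‖f(θ)‖² dθ. -/
/-!
Along the solution, `E(t) = ⟪A u(t), u(t)⟫` has derivative `2 ⟪A u, u'⟫ = 2 ⟪A u, f - A u⟫`
by the symmetry of `A`, and `2 ⟪x, y - x⟫ ≤ ‖y‖² / 2` for all vectors `x, y`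
(complete the square in `‖y - 2x‖²`). Integrating this differential inequality gives the bound.
-/

open scoped RealInnerProductSpace

section

variable {E : Type*} [NormedAddCommGroup E] [InnerProductSpace ℝ E]

theorem two_mul_inner_sub_self_le_half_norm_sq (x y : E) :
    2 * ⟪x, y - x⟫ ≤ ‖y‖ ^ 2 / 2 := by
  have hxy := real_inner_le_norm x y
  rw [inner_sub_right, real_inner_self_eq_norm_sq]
  nlinarith [sq_nonneg (‖y‖ - 2 * ‖x‖)]

theorem LinearMap.IsSymmetric.hasDerivAt_inner_apply_self [CompleteSpace E] {A : E →ₗ[ℝ] E}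
    (hA : A.IsSymmetric) {u : ℝ → E} {u' : E} {t : ℝ} (hu : HasDerivAt u u' t) :
    HasDerivAt (fun s => ⟪A (u s), u s⟫) (2 * ⟪A (u t), u'⟫) t := by
  have hAu : HasDerivAt (fun s => A (u s)) (A u') t :=
    (ContinuousLinearMap.mk A hA.continuous).hasFDerivAt.comp_hasDerivAt t hu
  refine (hAu.inner ℝ hu).congr_deriv ?_
  rw [hA, real_inner_comm, two_mul]

end

theorem stmt_0_general
    {U : Type*} [NormedAddCommGroup U] [InnerProductSpace ℝ U] [FiniteDimensional ℝ U]
    (A : U →ₗ[ℝ] U)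
    (hAsym : ∀ x y : U, ⟪A x, y⟫ = ⟪x, A y⟫)
    (T : ℝ)
    (f : ℝ → U) (hf : ContinuousOn f (Set.Icc 0 T))
    (u : ℝ → U) (u0 : U)
    (hu0 : u 0 = u0)
    (hode : ∀ t ∈ Set.Icc (0:ℝ) T, HasDerivAt u (f t - A (u t)) t) :
    ∀ t ∈ Set.Icc (0:ℝ) T,
      ⟪A (u t), u t⟫ ≤ ⟪A u0, u0⟫ + (1/2) * ∫ θ in (0:ℝ)..t, ‖f θ‖^2 := by
  intro t ht
  have hsub : Set.Icc 0 t ⊆ Set.Icc 0 T := Set.Icc_subset_Icc_right ht.2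
  have henergy : ∀ s ∈ Set.Icc 0 t, HasDerivAt (fun s => ⟪A (u s), u s⟫)
      (2 * ⟪A (u s), f s - A (u s)⟫) s := fun s hs =>
    LinearMap.IsSymmetric.hasDerivAt_inner_apply_self hAsym (hode s (hsub hs))
  have hbound := intervalIntegral.sub_le_integral_of_hasDeriv_right_of_le ht.1
    (fun s hs => (henergy s hs).continuousAt.continuousWithinAt)
    (fun s hs => (henergy s (Set.Ioo_subset_Icc_self hs)).hasDerivWithinAt)
    (((hf.mono hsub).norm.pow 2).div_const 2 |>.integrableOn_compact isCompact_Icc)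
    (fun s _ => two_mul_inner_sub_self_le_half_norm_sq (A (u s)) (f s))
  simp only [Pi.pow_apply, intervalIntegral.integral_div, hu0] at hbound
  linarith

/-- Energy estimate for the continuous Cauchy problem u' + A u = f. -/
theorem stmt_0
    {U : Type*} [NormedAddCommGroup U] [InnerProductSpace ℝ U] [FiniteDimensional ℝ U]
    (A : U →ₗ[ℝ] U)
    (hAsym : ∀ x y : U, ⟪A x, y⟫ = ⟪x, A y⟫)
    (hApos : ∀ x : U, 0 ≤ ⟪A x, x⟫)
    (T : ℝ) (hT : 0 < T)
    (f : ℝ → U) (hf : ContinuousOn f (Set.Icc 0 T))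
    (u : ℝ → U) (u0 : U)
    (hu0 : u 0 = u0)
    (hode : ∀ t ∈ Set.Icc (0:ℝ) T, HasDerivAt u (f t - A (u t)) t) :
    ∀ t ∈ Set.Icc (0:ℝ) T,
      ⟪A (u t), u t⟫ ≤ ⟪A u0, u0⟫ + (1/2) * ∫ θ in (0:ℝ)..t, ‖f θ‖^2 :=
  stmt_0_general A hAsym T f hf u u0 hu0 hode
end

section
/- For the implicit Euler scheme (y^{n+1} − y^n)/τ + A y^{n+1} = f^n with y⁰ = u⁰, where A is self-adjoint positive semidefinite and τ > 0, the discrete energy estimate ⟨A y^{n+1}, y^{n+1}⟩ ≤ ⟨A u⁰, u⁰⟩ + (1/2) Σ_{k=0}^{n} τ ‖f^k‖² holds for all n. -/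
open scoped RealInnerProductSpace

/-- Discrete energy estimate for the implicit Euler scheme
`(y^{n+1} - y^n)/τ + A y^{n+1} = f^n`, `y⁰ = u⁰`. -/
theorem stmt_1
    {U : Type*} [NormedAddCommGroup U] [InnerProductSpace ℝ U] [FiniteDimensional ℝ U]
    (A : U →ₗ[ℝ] U)
    (hAsym : ∀ x y : U, ⟪A x, y⟫ = ⟪x, A y⟫)
    (hApos : ∀ x : U, 0 ≤ ⟪A x, x⟫)
    (τ : ℝ) (hτ : 0 < τ)
    (f y : ℕ → U) (u0 : U)
    (hy0 : y 0 = u0)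
    (hscheme : ∀ n : ℕ, (1/τ) • (y (n+1) - y n) + A (y (n+1)) = f n) :
    ∀ n : ℕ,
      ⟪A (y (n+1)), y (n+1)⟫ ≤
        ⟪A u0, u0⟫ + (1/2) * ∑ k ∈ Finset.range (n+1), τ * ‖f k‖^2 := by
  have key : ∀ n : ℕ,
      ⟪A (y (n+1)), y (n+1)⟫ ≤ ⟪A (y n), y n⟫ + (1/2) * (τ * ‖f n‖^2) := by
    intro n
    set a := y (n+1) with ha
    set b := y n with hb
    set d := a - b with hd
    have hAa : A a = f n - (1/τ) • d := by
      have h := hscheme n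
      rw [← ha, ← hb, ← hd] at h
      rw [← h]; abel
    have hfd : ⟪A a, d⟫ = ⟪f n, d⟫ - (1/τ) * ‖d‖^2 := by
      rw [hAa, inner_sub_left, real_inner_smul_left, real_inner_self_eq_norm_sq]
    have hab : a = b + d := by rw [hd]; abel
    have hid : ⟪A a, a⟫ = ⟪A b, b⟫ + 2 * ⟪A a, d⟫ - ⟪A d, d⟫ := by
      rw [hab]
      simp only [map_add, inner_add_left, inner_add_right]
      have h1 : ⟪A b, d⟫ = ⟪A d, b⟫ := by
        rw [hAsym b d, real_inner_comm]
      linarith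
    have hcs : ⟪f n, d⟫ ≤ ‖f n‖ * ‖d‖ := real_inner_le_norm _ _
    have hAd : 0 ≤ ⟪A d, d⟫ := hApos d
    have hτ' : 0 < 1/τ := by positivity
    have haux : 2 * (‖f n‖ * ‖d‖) ≤ τ/2 * ‖f n‖^2 + (2/τ) * ‖d‖^2 := by
      rw [div_mul_eq_mul_div, div_mul_eq_mul_div,
        div_add_div _ _ two_ne_zero (ne_of_gt hτ), le_div_iff₀ (by positivity)]
      nlinarith [sq_nonneg (τ * ‖f n‖ - 2 * ‖d‖)]
    have h2 : 2 * ((1/τ) * ‖d‖^2) = (2/τ) * ‖d‖^2 := by ring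
    linarith
  intro n
  induction n with
  | zero =>
    have := key 0
    simpa [hy0, Finset.sum_range_one] using this
  | succ m ih =>
    have h := key (m+1)
    rw [Finset.sum_range_succ]
    have : ⟪A (y (m+1+1)), y (m+1+1)⟫ ≤
        (⟪A u0, u0⟫ + (1/2) * ∑ k ∈ Finset.range (m+1), τ * ‖f k‖^2)
          + (1/2) * (τ * ‖f (m+1)‖^2) := le_trans h (by linarith)
    linarith [this]
end

section
/- The single-step version of the implicit scheme estimate: if (y^{n+1} − y^n)/τ + A y^{n+1} = f^n with A self-adjoint positive semidefinite, then ⟨A y^{n+1}, y^{n+1}⟩ ≤ ⟨A y^n, y^n⟩ + (τ/2) ‖f^n‖². -/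
/-!
Test the scheme against the increment `d = y⁺ - y`. For symmetric `A`, polarization gives
`2⟪A y⁺, d⟫ = ⟪A y⁺, y⁺⟫ - ⟪A y, y⟫ + ⟪A d, d⟫`, and the last term is nonnegative; the scheme
turns the left side into `2⟪f, d⟫ - (2/τ)‖d‖²`, which Young's inequality bounds by `(τ/2)‖f‖²`.
-/

open scoped RealInnerProductSpace

namespace LinearMap.IsSymmetric

variable {U : Type*} [NormedAddCommGroup U] [InnerProductSpace ℝ U] {A : U →ₗ[ℝ] U}

theorem inner_map_self_sub_add_inner_map_sub (hA : A.IsSymmetric) (x y : U) :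
    ⟪A x, x⟫ - ⟪A y, y⟫ + ⟪A (x - y), x - y⟫ = 2 * ⟪A x, x - y⟫ := by
  have hxy : ⟪A y, x⟫ = ⟪A x, y⟫ := by rw [hA, real_inner_comm]
  simp only [map_sub, inner_sub_left, inner_sub_right]
  linarith

end LinearMap.IsSymmetric

theorem two_mul_real_inner_le {U : Type*} [NormedAddCommGroup U] [InnerProductSpace ℝ U]
    {τ : ℝ} (hτ : 0 < τ) (f d : U) :
    2 * ⟪f, d⟫ ≤ 2 * (‖d‖ ^ 2 / τ) + τ / 2 * ‖f‖ ^ 2 := by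
  have hgap : 2 * (‖d‖ ^ 2 / τ) + τ / 2 * ‖f‖ ^ 2 - 2 * ⟪f, d⟫
      = 2 / τ * ‖d - (τ / 2) • f‖ ^ 2 := by
    rw [norm_sub_sq_real, real_inner_smul_right, norm_smul, Real.norm_of_nonneg (half_pos hτ).le,
      real_inner_comm]
    field_simp
    ring
  have hnonneg : 0 ≤ 2 / τ * ‖d - (τ / 2) • f‖ ^ 2 := by positivity
  linarith

theorem stmt_2_general
    {U : Type*} [NormedAddCommGroup U] [InnerProductSpace ℝ U]
    (A : U →ₗ[ℝ] U)
    (hAsym : ∀ x y : U, ⟪A x, y⟫ = ⟪x, A y⟫)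
    (hApos : ∀ x : U, 0 ≤ ⟪A x, x⟫)
    (τ : ℝ) (hτ : 0 < τ)
    (yn ynp f : U)
    (hscheme : (1/τ) • (ynp - yn) + A ynp = f) :
    ⟪A ynp, ynp⟫ ≤ ⟪A yn, yn⟫ + (τ/2) * ‖f‖^2 := by
  have hpolar := LinearMap.IsSymmetric.inner_map_self_sub_add_inner_map_sub hAsym ynp yn
  have htest : ⟪A ynp, ynp - yn⟫ = ⟪f, ynp - yn⟫ - ‖ynp - yn‖ ^ 2 / τ := by
    rw [← hscheme, inner_add_left, real_inner_smul_left, real_inner_self_eq_norm_sq]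
    ring
  have hyoung := two_mul_real_inner_le hτ f (ynp - yn)
  have hdiss := hApos (ynp - yn)
  linarith

/-- Single-step energy estimate for the implicit Euler scheme. -/
theorem stmt_2
    {U : Type*} [NormedAddCommGroup U] [InnerProductSpace ℝ U] [FiniteDimensional ℝ U]
    (A : U →ₗ[ℝ] U)
    (hAsym : ∀ x y : U, ⟪A x, y⟫ = ⟪x, A y⟫)
    (hApos : ∀ x : U, 0 ≤ ⟪A x, x⟫)
    (τ : ℝ) (hτ : 0 < τ)
    (yn ynp f : U)
    (hscheme : (1/τ) • (ynp - yn) + A ynp = f) :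
    ⟪A ynp, ynp⟫ ≤ ⟪A yn, yn⟫ + (τ/2) * ‖f‖^2 :=
  stmt_2_general A hAsym hApos τ hτ yn ynp f hscheme
end

section
/- Suppose vectors r^n, r^{n+1}, s^n, s^{n+1}, f^n in a finite-dimensional inner product space V satisfy C (r^{n+1}+r^n)/(2τ) + (1/τ²) D (r^{n+1}−r^n) + B (s^{n+1}+s^n)/2 = f^n with r^{n+1}+r^n = 2(s^{n+1}−s^n), where C, B, D are self-adjoint positive semidefinite and ⟨f^n, r^{n+1}+r^n⟩ − (1/(2τ))⟨C(r^{n+1}+r^n), r^{n+1}+r^n⟩ ≤ (τ/2)‖f^n‖². Then the energy E^{n+1} = ⟨B s^{n+1}, s^{n+1}⟩ + (1/τ²)⟨D r^{n+1}, r^{n+1}⟩ satisfies E^{n+1} ≤ E^n + (τ/2)‖f^n‖². -/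
open scoped RealInnerProductSpace

/-- One-step energy dissipation inequality for the three-level splitting scheme. -/
theorem stmt_11
    {V : Type*} [NormedAddCommGroup V] [InnerProductSpace ℝ V] [FiniteDimensional ℝ V]
    (C B D : V →ₗ[ℝ] V)
    (hCsym : ∀ x y : V, ⟪C x, y⟫ = ⟪x, C y⟫) (hCpos : ∀ x : V, 0 ≤ ⟪C x, x⟫)
    (hBsym : ∀ x y : V, ⟪B x, y⟫ = ⟪x, B y⟫) (hBpos : ∀ x : V, 0 ≤ ⟪B x, x⟫)
    (hDsym : ∀ x y : V, ⟪D x, y⟫ = ⟪x, D y⟫) (hDpos : ∀ x : V, 0 ≤ ⟪D x, x⟫)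
    (τ : ℝ) (hτ : 0 < τ)
    (rn rnp sn snp fn : V)
    (heq : C ((1/(2*τ)) • (rnp + rn)) + (1/τ^2) • D (rnp - rn)
        + B ((1/2 : ℝ) • (snp + sn)) = fn)
    (hrs : rnp + rn = 2 • (snp - sn))
    (hf : ⟪fn, rnp + rn⟫ - (1/(2*τ)) * ⟪C (rnp + rn), rnp + rn⟫ ≤ (τ/2) * ‖fn‖^2) :
    ⟪B snp, snp⟫ + (1/τ^2) * ⟪D rnp, rnp⟫ ≤
      ⟪B sn, sn⟫ + (1/τ^2) * ⟪D rn, rn⟫ + (τ/2) * ‖fn‖^2 := by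
  have hDcross : ⟪D rnp, rn⟫ = ⟪D rn, rnp⟫ := by
    rw [hDsym rnp rn, real_inner_comm]
  have hD : ⟪D (rnp - rn), rnp + rn⟫ = ⟪D rnp, rnp⟫ - ⟪D rn, rn⟫ := by
    simp [map_sub, inner_sub_left, inner_add_right]
    linarith
  have hBcross : ⟪B snp, sn⟫ = ⟪B sn, snp⟫ := by
    rw [hBsym snp sn, real_inner_comm]
  have hB : ⟪B (snp + sn), snp - sn⟫ = ⟪B snp, snp⟫ - ⟪B sn, sn⟫ := by
    simp [map_add, inner_add_left, inner_sub_right]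
    linarith
  have hmain := congrArg (fun x => ⟪x, rnp + rn⟫) heq
  simp only [inner_add_left, map_smul, inner_smul_left, RCLike.ofReal_real_eq_id,
    id_eq, conj_trivial] at hmain
  rw [hD] at hmain
  have hB2 : ⟪B (snp + sn), rnp + rn⟫ = 2 * (⟪B snp, snp⟫ - ⟪B sn, sn⟫) := by
    rw [hrs, two_smul, inner_add_right, hB]; ring
  rw [hB2] at hmain
  have hsym : ⟪fn, rnp + rn⟫ = ⟪C (rnp + rn), rnp + rn⟫ * (1/(2*τ)) +
      (1/τ^2 * (⟪D rnp, rnp⟫ - ⟪D rn, rn⟫)) + (⟪B snp, snp⟫ - ⟪B sn, sn⟫) := by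
    rw [← hmain]
    ring
  nlinarith [hf, hsym]
end

section
/- Assume R_i R_j* = δ_{ij} I_i (direct-sum decomposition condition), B, B_0 self-adjoint positive semidefinite with B ≤ p B_0, and σ ≥ p/2. Then any sequence satisfying the two-level splitting scheme (w^{n+1}−w^n)/τ + B_0(σ w^{n+1} + (1−σ) w^n) + (B−B_0) w^n = f^n obeys ⟨B w^{n+1}, w^{n+1}⟩ ≤ ⟨B w^n, w^n⟩ + (τ/2)‖f^n‖². -/
open scoped RealInnerProductSpace

/-- Theorem 3: one-step stability of the two-level splitting scheme under the
direct-sum condition `R_i R_j* = δ_{ij} I`, `B ≤ p B₀`, `σ ≥ p/2`. -/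
theorem stmt_14
    {U : Type*} [NormedAddCommGroup U] [InnerProductSpace ℝ U] [FiniteDimensional ℝ U]
    {p : ℕ} {V : Fin p → Type*}
    [∀ i, NormedAddCommGroup (V i)] [∀ i, InnerProductSpace ℝ (V i)]
    [∀ i, FiniteDimensional ℝ (V i)]
    (R : ∀ i, U →ₗ[ℝ] V i)
    (hdiag : ∀ i (x : V i), R i ((LinearMap.adjoint (R i)) x) = x)
    (hoff : ∀ i j, i ≠ j → ∀ x : V j, R i ((LinearMap.adjoint (R j)) x) = 0)
    (B B0 : PiLp 2 V →ₗ[ℝ] PiLp 2 V)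
    (hBsym : ∀ x y : PiLp 2 V, ⟪B x, y⟫ = ⟪x, B y⟫)
    (hBpos : ∀ x : PiLp 2 V, 0 ≤ ⟪B x, x⟫)
    (hB0sym : ∀ x y : PiLp 2 V, ⟪B0 x, y⟫ = ⟪x, B0 y⟫)
    (hB0pos : ∀ x : PiLp 2 V, 0 ≤ ⟪B0 x, x⟫)
    (hBB0 : ∀ x : PiLp 2 V, ⟪B x, x⟫ ≤ (p : ℝ) * ⟪B0 x, x⟫)
    (σ τ : ℝ) (hσ : (p : ℝ)/2 ≤ σ) (hτ : 0 < τ)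
    (wn wnp fn : PiLp 2 V)
    (hscheme : (1/τ) • (wnp - wn) + B0 (σ • wnp + (1 - σ) • wn)
        + (B - B0) wn = fn) :
    ⟪B wnp, wnp⟫ ≤ ⟪B wn, wn⟫ + (τ/2) * ‖fn‖^2 := by
  set y := wnp - wn with hy
  have hwnp : wnp = wn + y := by rw [hy]; abel
  have hsch : (1/τ) • y + σ • (B0 y) + B wn = fn := by
    rw [← hscheme]
    simp only [map_add, map_smul, map_sub, LinearMap.sub_apply, hy]
    module
  have h1 : ⟪(1/τ) • y + σ • (B0 y) + B wn, y⟫ = ⟪fn, y⟫ := by rw [hsch]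
  rw [inner_add_left, inner_add_left, real_inner_smul_left, real_inner_smul_left] at h1
  have hE : ⟪B wnp, wnp⟫ = ⟪B wn, wn⟫ + 2*⟪B wn, y⟫ + ⟪B y, y⟫ := by
    rw [hwnp, map_add, inner_add_left, inner_add_right, inner_add_right]
    have h2 : ⟪B y, wn⟫ = ⟪B wn, y⟫ := by rw [hBsym, real_inner_comm]
    rw [h2]; ring
  have hBy := hBB0 y
  have hB0y := hB0pos y
  have hfy : ⟪fn, y⟫ ≤ ‖fn‖ * ‖y‖ := real_inner_le_norm fn y
  have hyy : ⟪y, y⟫ = ‖y‖^2 := real_inner_self_eq_norm_sq y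
  have ha : (1/τ) * τ = 1 := by field_simp
  rw [hE]
  nlinarith [sq_nonneg (τ*‖fn‖ - 2*‖y‖), hτ, sq_nonneg ‖y‖, sq_nonneg ‖fn‖,
    mul_nonneg (by linarith : (0:ℝ) ≤ 2*σ - p) hB0y,
    mul_le_mul_of_nonneg_left hfy hτ.le, mul_pos hτ hτ]
end

section
/- Let G : V → V be self-adjoint positive semidefinite and B : V → V self-adjoint positive semidefinite, τ > 0. If (I + τ G)(w^{n+1}−w^n)/τ + B(w^{n+1}+w^n)/2 = f^n, then ⟨B w^{n+1}, w^{n+1}⟩ ≤ ⟨B w^n, w^n⟩ + (τ/2)‖f^n‖². -/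
open scoped RealInnerProductSpace

/-- Stability step for a regularized two-level scheme: if `G` and `B` are self-adjoint
positive semidefinite and `(I + τG)(w^{n+1}−w^n)/τ + B(w^{n+1}+w^n)/2 = f^n`, then
`⟨B w^{n+1}, w^{n+1}⟩ ≤ ⟨B w^n, w^n⟩ + (τ/2)‖f^n‖²`. -/
theorem stmt_16
    {V : Type*} [NormedAddCommGroup V] [InnerProductSpace ℝ V] [FiniteDimensional ℝ V]
    (G B : V →ₗ[ℝ] V)
    (hGsym : ∀ x y : V, ⟪G x, y⟫ = ⟪x, G y⟫) (hGpos : ∀ x : V, 0 ≤ ⟪G x, x⟫)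
    (hBsym : ∀ x y : V, ⟪B x, y⟫ = ⟪x, B y⟫) (hBpos : ∀ x : V, 0 ≤ ⟪B x, x⟫)
    (τ : ℝ) (hτ : 0 < τ)
    (wn wnp fn : V)
    (hscheme : ((LinearMap.id + τ • G : V →ₗ[ℝ] V)) ((1/τ) • (wnp - wn))
        + B ((1/2 : ℝ) • (wnp + wn)) = fn) :
    ⟪B wnp, wnp⟫ ≤ ⟪B wn, wn⟫ + (τ/2) * ‖fn‖^2 := by
  set d := wnp - wn with hd
  have key := congrArg (fun v => ⟪v, d⟫) hscheme
  simp only [LinearMap.add_apply, LinearMap.id_apply, LinearMap.smul_apply,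
    inner_add_left, real_inner_smul_left, map_smul, map_add, smul_sub, smul_add] at key
  -- rewrite cross terms
  have hcross : ⟪B wn, wnp⟫ = ⟪B wnp, wn⟫ := by
    rw [hBsym, real_inner_comm]
  have hBd : ⟪B (wnp + wn), d⟫ = ⟪B wnp, wnp⟫ - ⟪B wn, wn⟫ := by
    simp [hd, map_add, inner_add_left, inner_sub_right, hcross]
    ring
  have hBd2 : ⟪B wnp, d⟫ + ⟪B wn, d⟫ = ⟪B wnp, wnp⟫ - ⟪B wn, wn⟫ := by
    rw [← inner_add_left, ← map_add]; exact hBd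
  have hτne' : τ ≠ 0 := ne_of_gt hτ
  have key2 : ⟪d, d⟫ + τ * ⟪G d, d⟫ + τ * (1/2 * ⟪B wnp, d⟫ + 1/2 * ⟪B wn, d⟫) = τ * ⟪fn, d⟫ := by
    field_simp at key
    linarith
  have hGd := hGpos d
  have hBn := hBpos wn
  have hdd : ⟪d, d⟫ = ‖d‖^2 := real_inner_self_eq_norm_sq d
  have hcs : ⟪fn, d⟫ ≤ ‖fn‖ * ‖d‖ := real_inner_le_norm fn d
  have hfd : ⟪d, fn⟫ = ⟪fn, d⟫ := real_inner_comm fn d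
  have hsq := sq_nonneg (τ * ‖fn‖ - 2 * ‖d‖)
  have h0 : (0:ℝ) < τ := hτ
  have hτne : τ ≠ 0 := ne_of_gt hτ
  nlinarith [key, hGd, hBd, hdd, hcs, hsq, mul_pos hτ hτ,
    mul_le_mul_of_nonneg_left hcs (le_of_lt hτ), norm_nonneg fn, norm_nonneg d,
    sq_nonneg (‖fn‖ - ‖d‖)]
end

section
/- Under B = B_1 + B_2 with B_1* = B_2, B positive semidefinite, σ ≥ 1/2, τ > 0, any sequence w^n satisfying the factorized scheme (I + τσ B_1)(I + τσ B_2)(w^{n+1}−w^n)/τ + B w^n = f^n obeys the stability estimate ⟨B w^{n+1}, w^{n+1}⟩ ≤ ⟨B w^0, w^0⟩ + (1/2) Σ_{k=0}^n τ ‖f^k‖². -/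
open scoped RealInnerProductSpace

/-- Theorem 4: unconditional stability of the factorized splitting scheme for
`σ ≥ 1/2`: `⟨B w^{n+1}, w^{n+1}⟩ ≤ ⟨B w⁰, w⁰⟩ + (1/2) Σ_{k=0}^n τ ‖f^k‖²`. -/
theorem stmt_19
    {V : Type*} [NormedAddCommGroup V] [InnerProductSpace ℝ V] [FiniteDimensional ℝ V]
    (B1 B2 : V →ₗ[ℝ] V)
    (hadj : LinearMap.adjoint B1 = B2)
    (B : V →ₗ[ℝ] V) (hB : B = B1 + B2)
    (hBpos : ∀ x : V, 0 ≤ ⟪B x, x⟫)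
    (σ τ : ℝ) (hσ : 1/2 ≤ σ) (hτ : 0 < τ)
    (w f : ℕ → V)
    (hscheme : ∀ n : ℕ,
      ((LinearMap.id + (τ*σ) • B1 : V →ₗ[ℝ] V))
          (((LinearMap.id + (τ*σ) • B2 : V →ₗ[ℝ] V)) ((1/τ) • (w (n+1) - w n)))
        + B (w n) = f n) :
    ∀ n : ℕ,
      ⟪B (w (n+1)), w (n+1)⟫ ≤
        ⟪B (w 0), w 0⟫ + (1/2) * ∑ k ∈ Finset.range (n+1), τ * ‖f k‖^2 := by
  -- inner product identities
  have hsa2 : ∀ x y : V, ⟪B2 x, y⟫ = ⟪x, B1 y⟫ := by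
    intro x y
    rw [← hadj, LinearMap.adjoint_inner_left]
  have hsa1 : ∀ x y : V, ⟪B1 x, y⟫ = ⟪x, B2 y⟫ := by
    intro x y
    rw [real_inner_comm, ← hsa2, real_inner_comm]
  have hBsym : ∀ x y : V, ⟪B x, y⟫ = ⟪x, B y⟫ := by
    intro x y
    simp [hB, LinearMap.add_apply, inner_add_left, inner_add_right, hsa1, hsa2]
    ring
  -- one-step estimate
  have step : ∀ n : ℕ, ⟪B (w (n+1)), w (n+1)⟫ ≤ ⟪B (w n), w n⟫ + (1/2) * (τ * ‖f n‖^2) := by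
    intro n
    set v : V := (1/τ) • (w (n+1) - w n) with hv
    have hw1 : w (n+1) = w n + τ • v := by
      rw [hv, smul_smul, mul_one_div, div_self hτ.ne']
      simp
    have h := congrArg (fun x : V => ⟪x, v⟫) (hscheme n)
    rw [show (1/τ : ℝ) • (w (n+1) - w n) = v from hv.symm] at h
    simp only [LinearMap.add_apply, LinearMap.smul_apply, LinearMap.id_apply, map_add,
      map_smul, inner_add_left, real_inner_smul_left] at h
    -- h : ⟪v,v⟫ + τσ⟪B2 v,v⟫ + τσ(⟪B1 v,v⟫+τσ⟪B1(B2 v),v⟫) + ⟪B w n, v⟫ = ⟪f n, v⟫  (roughly)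
    have h12 : ⟪B1 (B2 v), v⟫ = ⟪B2 v, B2 v⟫ := by
      rw [hsa1, real_inner_comm]
    have hE : ⟪B (w (n+1)), w (n+1)⟫ =
        ⟪B (w n), w n⟫ + 2*τ*⟪B (w n), v⟫ + τ^2 * ⟪B v, v⟫ := by
      rw [hw1]
      simp only [map_add, map_smul, inner_add_left, inner_add_right,
        real_inner_smul_left, real_inner_smul_right]
      have : ⟪B v, w n⟫ = ⟪B (w n), v⟫ := by rw [hBsym, real_inner_comm]
      rw [this]; ring
    have hBv : ⟪B v, v⟫ = ⟪B1 v, v⟫ + ⟪B2 v, v⟫ := by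
      simp [hB, LinearMap.add_apply, inner_add_left]
    have hBvpos : 0 ≤ ⟪B v, v⟫ := hBpos v
    have hB2v : (0:ℝ) ≤ ⟪B2 v, B2 v⟫ := real_inner_self_nonneg
    have hfv : ⟪f n, v⟫ ≤ ‖f n‖ * ‖v‖ := real_inner_le_norm _ _
    have hvv : ⟪v, v⟫ = ‖v‖^2 := real_inner_self_eq_norm_sq v
    have hsq : (0:ℝ) ≤ (‖f n‖ - 2*‖v‖)^2 := sq_nonneg _
    rw [hE]
    rw [h12] at h
    have hX : 2*τ*⟪B (w n), v⟫ = 2*τ*⟪f n, v⟫ - 2*τ*⟪v,v⟫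
        - 2*τ^2*σ*(⟪B1 v,v⟫+⟪B2 v,v⟫) - 2*τ^3*σ^2*⟪B2 v, B2 v⟫ := by
      linear_combination 2*τ*h
    have h1 : (0:ℝ) ≤ τ * ((‖f n‖ - 2*‖v‖)^2) := mul_nonneg hτ.le hsq
    have h2 : (2*τ) * ⟪f n, v⟫ ≤ (2*τ)*(‖f n‖*‖v‖) :=
      mul_le_mul_of_nonneg_left hfv (by positivity)
    have h3 : (0:ℝ) ≤ ((2*σ-1)*τ^2) * (⟪B1 v,v⟫+⟪B2 v,v⟫) := by
      rw [← hBv]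
      exact mul_nonneg (by nlinarith [sq_nonneg τ, hτ]) hBvpos
    have h4 : (0:ℝ) ≤ (2*τ^3*σ^2) * ⟪B2 v, B2 v⟫ := by positivity
    have hvv' : 2*τ*⟪v,v⟫ = 2*τ*‖v‖^2 := by rw [hvv]
    rw [hBv]
    nlinarith [hX, h1, h2, h3, h4, hvv']
  intro n
  induction n with
  | zero => simpa using step 0
  | succ m ih =>
      have := step (m+1)
      rw [Finset.sum_range_succ]
      calc ⟪B (w (m+1+1)), w (m+1+1)⟫
          ≤ ⟪B (w (m+1)), w (m+1)⟫ + (1/2) * (τ * ‖f (m+1)‖^2) := this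
        _ ≤ ⟪B (w 0), w 0⟫ + 1/2 * ∑ k ∈ Finset.range (m+1), τ * ‖f k‖^2
              + (1/2) * (τ * ‖f (m+1)‖^2) := by linarith
        _ = _ := by ring
end
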